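/- arXiv:2208.04055 — 2 statements merged into one kernel-verified Lean document; each statement's English description precedes it below -/
import Mathlib

section
/- With the setup of a scalar set function extension (p_x a probability distribution on subsets with ∑_S p_x(S)·1_S = x), any minimizer x of f̄ over [0,1]^n lies in the convex hull of the set {1_S : S ∈ argmin_{T ⊆ [n]} f(T)}. -/
/-!
Let `S₀` minimise `f`. The only distribution with mean `1_{S₀}` is the point mass at `S₀`, so
`f̄(1_{S₀}) = f(S₀)`, and a minimiser `x` of `f̄` has `f̄(x) ≤ min f`. Since `f̄(x)` is an average
of values of `f`, each of them `≥ min f`, every set charged by `p_x` minimises `f`; and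
`x = ∑_S p_x(S) 1_S` is then a convex combination of indicators of minimisers.
-/

open Finset

theorem eq_of_sum_mul_le_sum_mul_of_le {α : Type*} {s : Finset α} {w g : α → ℝ} {c : ℝ}
    (hw : ∀ a ∈ s, 0 ≤ w a) (hc : ∀ a ∈ s, c ≤ g a)
    (hle : ∑ a ∈ s, w a * g a ≤ (∑ a ∈ s, w a) * c) {a : α} (ha : a ∈ s) (hwa : w a ≠ 0) :
    g a = c := by
  have hterm : ∀ b ∈ s, 0 ≤ w b * (g b - c) := fun b hb =>
    mul_nonneg (hw b hb) (sub_nonneg.mpr (hc b hb))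
  have hzero : ∑ b ∈ s, w b * (g b - c) = 0 := by
    refine le_antisymm ?_ (sum_nonneg hterm)
    simp only [mul_sub, sum_sub_distrib, ← sum_mul]
    linarith
  have := (sum_eq_zero_iff_of_nonneg hterm).mp hzero a ha
  linarith [(mul_eq_zero.mp this).resolve_left hwa]

section Indicator

variable {ι : Type*} [DecidableEq ι]

def indicatorVec (S : Finset ι) : ι → ℝ := fun i => if i ∈ S then 1 else 0

theorem indicatorVec_mem_Icc (S : Finset ι) (i : ι) : indicatorVec S i ∈ Set.Icc (0 : ℝ) 1 := by
  unfold indicatorVec; split_ifs <;> norm_num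

variable [Fintype ι]

structure IsDistribWithMean (q : Finset ι → ℝ) (x : ι → ℝ) : Prop where
  nonneg : ∀ S, 0 ≤ q S
  sum_eq_one : ∑ S, q S = 1
  mean_eq : ∀ i, ∑ S, q S * indicatorVec S i = x i

namespace IsDistribWithMean

variable {q : Finset ι → ℝ} {x : ι → ℝ}

theorem mem_convexHull {V : Set (ι → ℝ)} (hq : IsDistribWithMean q x)
    (hV : ∀ S, q S ≠ 0 → indicatorVec S ∈ V) : x ∈ convexHull ℝ V := by
  have hx : x = ∑ S with q S ≠ 0, q S • indicatorVec S := by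
    ext i
    rw [← hq.mean_eq i, Finset.sum_apply,
      sum_filter_of_ne (p := fun S => q S ≠ 0) fun S _ h hS => h (by simp [hS])]
    rfl
  rw [hx]
  refine (convex_convexHull ℝ V).sum_mem (fun S _ => hq.nonneg S) ?_
    (fun S hS => subset_convexHull ℝ V (hV S (mem_filter.mp hS).2))
  rw [sum_filter_ne_zero, hq.sum_eq_one]

theorem eq_of_ne_zero_of_mean_indicatorVec {S₀ S : Finset ι}
    (hq : IsDistribWithMean q (indicatorVec S₀)) (hS : q S ≠ 0) : S = S₀ := by
  have hnonneg : ∀ T ∈ (univ : Finset (Finset ι)), 0 ≤ q T := fun T _ => hq.nonneg T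
  ext i
  by_cases hi : i ∈ S₀
  · -- `1_T(i) ≤ 1` has mean `1`, so it equals `1` on the support
    have h := eq_of_sum_mul_le_sum_mul_of_le (g := fun T => -indicatorVec T i) (c := -1)
      hnonneg (fun T _ => neg_le_neg (indicatorVec_mem_Icc T i).2)
      (by simp only [mul_neg, sum_neg_distrib, hq.mean_eq, hq.sum_eq_one]; simp [indicatorVec, hi])
      (mem_univ S) hS
    simp only [indicatorVec, neg_inj] at h
    simpa [hi] using h
  · have h := eq_of_sum_mul_le_sum_mul_of_le (g := fun T => indicatorVec T i) (c := 0)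
      hnonneg (fun T _ => (indicatorVec_mem_Icc T i).1)
      (by simp only [hq.mean_eq]; simp [indicatorVec, hi]) (mem_univ S) hS
    simp only [indicatorVec] at h
    simpa [hi] using h

theorem sum_mul_eq_of_mean_indicatorVec {S₀ : Finset ι}
    (hq : IsDistribWithMean q (indicatorVec S₀)) (f : Finset ι → ℝ) :
    ∑ S, q S * f S = f S₀ := by
  have hconst : ∀ S, q S * f S = q S * f S₀ := fun S => by
    by_cases hS : q S = 0
    · simp [hS]
    · rw [hq.eq_of_ne_zero_of_mean_indicatorVec hS]
  simp only [hconst, ← sum_mul, hq.sum_eq_one, one_mul]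

end IsDistribWithMean

end Indicator

/-- Any minimizer of a scalar SFE `f̄` over the cube lies in the convex
hull of the indicator vectors of the sets minimizing `f`. -/
theorem scalar_sfe_argmin_in_hull (n : ℕ) (f : Finset (Fin n) → ℝ)
    (p : (Fin n → ℝ) → Finset (Fin n) → ℝ)
    (hnonneg : ∀ x : Fin n → ℝ, (∀ i, x i ∈ Set.Icc (0:ℝ) 1) →
      ∀ S : Finset (Fin n), 0 ≤ p x S)
    (hsum : ∀ x : Fin n → ℝ, (∀ i, x i ∈ Set.Icc (0:ℝ) 1) →
      ∑ S : Finset (Fin n), p x S = 1)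
    (hfeas : ∀ x : Fin n → ℝ, (∀ i, x i ∈ Set.Icc (0:ℝ) 1) →
      ∀ i : Fin n, ∑ S : Finset (Fin n), p x S * (if i ∈ S then (1:ℝ) else 0) = x i)
    (x : Fin n → ℝ) (hx : ∀ i, x i ∈ Set.Icc (0:ℝ) 1)
    (hmin : ∀ y : Fin n → ℝ, (∀ i, y i ∈ Set.Icc (0:ℝ) 1) →
      ∑ S : Finset (Fin n), p x S * f S ≤ ∑ S : Finset (Fin n), p y S * f S) :
    x ∈ convexHull ℝ {v : Fin n → ℝ |
      ∃ S : Finset (Fin n), (∀ T : Finset (Fin n), f S ≤ f T) ∧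
        v = fun i => if i ∈ S then (1:ℝ) else 0} := by
  have hp : ∀ y, (∀ i, y i ∈ Set.Icc (0:ℝ) 1) → IsDistribWithMean (p y) y := fun y hy =>
    ⟨hnonneg y hy, hsum y hy, hfeas y hy⟩
  obtain ⟨S₀, hS₀⟩ := Finite.exists_min f
  have hS₀_cube := indicatorVec_mem_Icc S₀
  have hle : ∑ S, p x S * f S ≤ (∑ S, p x S) * f S₀ := by
    rw [(hp x hx).sum_eq_one, one_mul,
      ← (hp _ hS₀_cube).sum_mul_eq_of_mean_indicatorVec f]
    exact hmin _ hS₀_cube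
  refine (hp x hx).mem_convexHull fun S hS => ⟨S, fun T => ?_, rfl⟩
  rw [eq_of_sum_mul_le_sum_mul_of_le (fun T _ => hnonneg x hx T) (fun T _ => hS₀ T)
    hle (mem_univ S) hS]
  exact hS₀ T
end

section
/- Define the singleton extension of a function g : [n] → ℝ with g(i) < 0 for a unique minimizer and min_i g(i) < 0 by f̄(x) = ∑_{i=1}^n (x_i − x_{i+1}) g(i) for sorted x ∈ [0,1]^n (x_1 ≥ … ≥ x_n, x_{n+1} = 0, coordinates relabeled so g respects the sort). Then f̄(x) ≥ min_i g(i) for all x ∈ [0,1]^n, with equality attained at x = e_1 (after relabeling so the minimizer is first); moreover any minimizer x of f̄ equals the indicator of the unique minimizing singleton. -/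
/-! Since the consecutive differences `x i - x (i+1)` telescope to `x 0`,
`F x = x 0 * g 0 + ∑ i, (x i - x (i+1)) * (g i - g 0)`. For a sorted point of the cube every
difference is nonnegative, and so is every `g i - g 0`; with `x 0 ≤ 1` and `g 0 < 0` this gives
`F x ≥ g 0`. Equality forces `x 0 = 1` and, as `g i > g 0` for `i ≠ 0`, every difference after
the first to vanish; each `x i` is the sum of the differences from `i` on, so `x = e₁`. -/

open Finset

section ConsecDiff

variable {n : ℕ}

def consecDiff {M : Type*} [AddCommGroup M] (x : Fin (n + 1) → M) (i : Fin (n + 1)) : M :=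
  x i - if h : (i : ℕ) + 1 < n + 1 then x ⟨(i : ℕ) + 1, h⟩ else 0

section AddCommGroup

variable {M : Type*} [AddCommGroup M] (x : Fin (n + 1) → M)

@[simp]
lemma consecDiff_castSucc (i : Fin n) : consecDiff x i.castSucc = x i.castSucc - x i.succ := by
  simp [consecDiff, Fin.succ]

@[simp]
lemma consecDiff_last : consecDiff x (Fin.last n) = x (Fin.last n) := by
  simp [consecDiff]

lemma sum_Ici_consecDiff (i : Fin (n + 1)) : ∑ j ∈ Ici i, consecDiff x j = x i := by
  induction i using Fin.reverseInduction with
  | last => rw [show Ici (Fin.last n) = {Fin.last n} from Ici_top, sum_singleton, consecDiff_last]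
  | cast i ih =>
    have hIci : Ici i.castSucc = insert i.castSucc (Ici i.succ) := by
      ext j
      simp only [mem_Ici, mem_insert, Fin.le_def, Fin.ext_iff, Fin.val_castSucc, Fin.val_succ]
      omega
    rw [hIci, sum_insert (by simp [Fin.le_def]), ih, consecDiff_castSucc, sub_add_cancel]

lemma sum_consecDiff : ∑ i, consecDiff x i = x 0 := by
  simpa using sum_Ici_consecDiff x 0

lemma eq_single_of_consecDiff_eq_zero (h : ∀ i, i ≠ 0 → consecDiff x i = 0) :
    x = Pi.single 0 (x 0) := by
  funext i
  rcases eq_or_ne i 0 with rfl | hi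
  · simp
  · rw [Pi.single_eq_of_ne hi, ← sum_Ici_consecDiff x i]
    refine sum_eq_zero fun j hj => h j ?_
    rintro rfl
    exact hi (le_antisymm (mem_Ici.mp hj) (Fin.zero_le i))

lemma consecDiff_single_zero_of_ne (a : M) {i : Fin (n + 1)} (hi : i ≠ 0) :
    consecDiff (Pi.single 0 a) i = 0 := by
  simp only [consecDiff, Pi.single_eq_of_ne hi]
  split_ifs with h
  · rw [Pi.single_eq_of_ne (Fin.ne_of_val_ne (Nat.succ_ne_zero _)), sub_zero]
  · rw [sub_zero]

lemma consecDiff_nonneg [PartialOrder M] [IsOrderedAddMonoid M] (hx : Antitone x)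
    (hlast : 0 ≤ x (Fin.last n)) (i : Fin (n + 1)) : 0 ≤ consecDiff x i := by
  induction i using Fin.lastCases with
  | last => simpa using hlast
  | cast i => simpa using hx (Fin.castSucc_le_succ i)

end AddCommGroup

lemma sum_consecDiff_mul_eq {R : Type*} [Ring R] (x g : Fin (n + 1) → R) :
    ∑ i, consecDiff x i * g i = x 0 * g 0 + ∑ i, consecDiff x i * (g i - g 0) := by
  simp only [mul_sub, sum_sub_distrib, ← sum_mul, sum_consecDiff]
  rw [add_sub_cancel]

end ConsecDiff

/-- No-bad-minima property of the singleton extension. With coordinates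
relabeled so the unique (negative) minimizer of `g` comes first, the singleton
extension `F x = ∑ i, (x i - x (i+1)) g i` (with `x (n+1) = 0`) of `g` over sorted
points of the cube satisfies `F x ≥ g 0`, with equality at `x = e₁`, and any sorted
minimizer in the cube equals `e₁`. -/
theorem singleton_extension_no_bad_minima (n : ℕ) (g : Fin (n + 1) → ℝ)
    (hneg : g 0 < 0) (hmin : ∀ j : Fin (n + 1), j ≠ 0 → g 0 < g j)
    (F : (Fin (n + 1) → ℝ) → ℝ)
    (hF : ∀ x : Fin (n + 1) → ℝ, F x = ∑ i : Fin (n + 1),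
      (x i - (if h : (i : ℕ) + 1 < n + 1 then x ⟨(i : ℕ) + 1, h⟩ else 0)) * g i) :
    (∀ x : Fin (n + 1) → ℝ, (∀ i, x i ∈ Set.Icc (0:ℝ) 1) →
      (∀ i j : Fin (n + 1), i ≤ j → x j ≤ x i) → g 0 ≤ F x) ∧
    F (Pi.single 0 1) = g 0 ∧
    (∀ x : Fin (n + 1) → ℝ, (∀ i, x i ∈ Set.Icc (0:ℝ) 1) →
      (∀ i j : Fin (n + 1), i ≤ j → x j ≤ x i) → F x = g 0 →
      x = Pi.single 0 1) := by
  have hF' (x) : F x = x 0 * g 0 + ∑ i, consecDiff x i * (g i - g 0) :=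
    (hF x).trans (sum_consecDiff_mul_eq x g)
  have hgap (i) : 0 ≤ g i - g 0 := by
    rcases eq_or_ne i 0 with rfl | hi
    exacts [(sub_self _).ge, sub_nonneg.2 (hmin i hi).le]
  have hterm (x : Fin (n + 1) → ℝ) (hx : ∀ i, x i ∈ Set.Icc (0:ℝ) 1) (hs : Antitone x) (i) :
      0 ≤ consecDiff x i * (g i - g 0) :=
    mul_nonneg (consecDiff_nonneg x hs (hx _).1 i) (hgap i)
  refine ⟨fun x hx hs => ?_, ?_, fun x hx hs hFx => ?_⟩
  · rw [hF']
    nlinarith [sum_nonneg (s := univ) fun i _ => hterm x hx hs i, (hx 0).2]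
  · rw [hF', sum_eq_zero fun i _ => ?_]
    · simp
    rcases eq_or_ne i 0 with rfl | hi
    · simp
    · rw [consecDiff_single_zero_of_ne _ hi, zero_mul]
  · rw [hF'] at hFx
    have hS := sum_nonneg (s := univ) fun i _ => hterm x hx hs i
    have hx0 : x 0 = 1 := by nlinarith [(hx 0).2]
    have hS0 : ∑ i, consecDiff x i * (g i - g 0) = 0 := by
      rw [hx0] at hFx
      linarith
    have hdiff (i) (hi : i ≠ 0) : consecDiff x i = 0 :=
      (mul_eq_zero.1 ((sum_eq_zero_iff_of_nonneg fun i _ => hterm x hx hs i).1 hS0 i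
        (mem_univ i))).resolve_right (sub_pos.2 (hmin i hi)).ne'
    rw [eq_single_of_consecDiff_eq_zero x hdiff, hx0]
end
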